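/- Let k = 2ℓ+1 be odd and F the k-dimensional Lyness map with a ≥ 0. Then the measure m_2(B) = ∫_B dx/(x_1 x_2 ··· x_k) is invariant under F∘F: m_2(F²(B)) = m_2(B) for every measurable B ⊆ Q⁺. -/

import Mathlib

/-!
Write `c(x) = a + x₂ + ⋯ + x_k`. The Lyness map is `F = R ∘ φ`, where `φ` replaces `x₁` by
`c(x) / x₁` and `R` rotates the coordinates. `R` preserves Lebesgue measure and the product
`Π(x) = x₁ ⋯ x_k`. On the positive orthant `φ` is an involution whose Jacobian is the
identity with the first row replaced by `∇(c/x₁)`, so `det Dφ(x) = -c(x)/x₁²`, and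
`Π(φ(x)) = (c(x)/x₁²) Π(x) = -det Dφ(x) Π(x)`. By the change of variables formula, `φ`, and hence
`F`, preserves `m₂`. The sign is lost in the absolute value of the Jacobian, so `m₂` is already
`F`-invariant, and applying this twice gives the result for `F ∘ F`.
-/

open MeasureTheory Function
open scoped ENNReal

theorem Matrix.det_updateRow_one {R ι : Type*} [CommRing R] [Fintype ι] [DecidableEq ι]
    (i : ι) (r : ι → R) : (Matrix.updateRow 1 i r).det = r i := by
  have h := Matrix.det_updateRow_sum (1 : Matrix ι ι R) i r
  simp only [Matrix.det_one, smul_eq_mul, mul_one] at h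
  convert h
  ext j
  simp [Matrix.one_eq_pi_single, Pi.single_apply]

section UpdateFDeriv

variable {𝕜 ι : Type*} [NontriviallyNormedField 𝕜] [Fintype ι] [DecidableEq ι]

def updateFDeriv (i : ι) (g' : (ι → 𝕜) →L[𝕜] 𝕜) : (ι → 𝕜) →L[𝕜] (ι → 𝕜) :=
  ContinuousLinearMap.pi (update ContinuousLinearMap.proj i g')

theorem hasFDerivAt_update_self {g : (ι → 𝕜) → 𝕜} {g' : (ι → 𝕜) →L[𝕜] 𝕜} {x : ι → 𝕜}
    (i : ι) (hg : HasFDerivAt g g' x) :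
    HasFDerivAt (fun y => update y i (g y)) (updateFDeriv i g') x := by
  refine hasFDerivAt_pi.2 fun j => ?_
  rcases eq_or_ne j i with rfl | hj
  · simpa using hg
  · simpa [update_of_ne hj] using hasFDerivAt_apply j x

theorem det_updateFDeriv (i : ι) (g' : (ι → 𝕜) →L[𝕜] 𝕜) :
    (updateFDeriv i g').det = g' (Pi.single i 1) := by
  have : LinearMap.toMatrix' (updateFDeriv i g' : (ι → 𝕜) →ₗ[𝕜] ι → 𝕜)
      = Matrix.updateRow 1 i fun j => g' (Pi.single j 1) := by
    ext j k
    rcases eq_or_ne j i with rfl | hj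
    · simp [updateFDeriv]
    · simp [updateFDeriv, hj, Matrix.one_eq_pi_single, Pi.single_apply, eq_comm]
  rw [ContinuousLinearMap.det, ← LinearMap.det_toMatrix', this, Matrix.det_updateRow_one]

end UpdateFDeriv

section CoordinatePermutation

variable {ι : Type*} (e : Equiv.Perm ι)

theorem MeasurableEquiv.coe_piCongrLeft_symm_perm {β : Type*} [MeasurableSpace β] :
    ⇑(MeasurableEquiv.piCongrLeft (fun _ : ι => β) e.symm) = (· ∘ e) := by
  ext x i
  simp [MeasurableEquiv.coe_piCongrLeft, Equiv.piCongrLeft_apply]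

theorem MeasurableSet.image_comp_perm {β : Type*} [MeasurableSpace β] {T : Set (ι → β)}
    (hT : MeasurableSet T) : MeasurableSet ((· ∘ e) '' T) := by
  rw [← MeasurableEquiv.coe_piCongrLeft_symm_perm]
  exact (MeasurableEquiv.piCongrLeft _ e.symm).measurableSet_image.2 hT

theorem setLIntegral_image_comp_perm [Fintype ι] {β : Type*} [MeasureSpace β]
    [SigmaFinite (volume : Measure β)] (f : (ι → β) → ℝ≥0∞) (T : Set (ι → β)) :
    ∫⁻ x in (· ∘ e) '' T, f x = ∫⁻ x in T, f (x ∘ e) := by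
  simpa only [MeasurableEquiv.coe_piCongrLeft_symm_perm] using
    ((volume_measurePreserving_piCongrLeft (fun _ : ι => β) e.symm).setLIntegral_comp_emb
      (MeasurableEquiv.measurableEmbedding _) f T).symm

end CoordinatePermutation

variable {n : ℕ} {a : ℝ}

noncomputable def lynessCoord (a : ℝ) (x : Fin (n + 1) → ℝ) : ℝ :=
  (a + ∑ j : Fin n, x j.succ) / x 0

noncomputable def lynessUpdate (a : ℝ) (x : Fin (n + 1) → ℝ) : Fin (n + 1) → ℝ :=
  update x 0 (lynessCoord a x)

noncomputable def lynessMap (a : ℝ) (x : Fin (n + 1) → ℝ) : Fin (n + 1) → ℝ :=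
  lynessUpdate a x ∘ finRotate (n + 1)

theorem lynessMap_apply (x : Fin (n + 1) → ℝ) (i : Fin (n + 1)) :
    lynessMap a x i = if h : (i : ℕ) + 1 < n + 1 then x ⟨i + 1, h⟩
      else (a + ∑ j, x j - x 0) / x 0 := by
  split_ifs with h
  · obtain ⟨i, -⟩ := i
    simp [lynessMap, lynessUpdate, finRotate_of_lt (show i < n by simpa using h)]
  · obtain rfl : i = Fin.last n := Fin.ext (by have := i.isLt; rw [Fin.val_last]; omega)
    simp only [lynessMap, lynessUpdate, lynessCoord, comp_apply, finRotate_last, update_self,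
      Fin.sum_univ_succ x]
    ring

theorem lynessCoord_pos (hn : 0 < n) (ha : 0 ≤ a) {x : Fin (n + 1) → ℝ} (hx : ∀ i, 0 < x i) :
    0 < lynessCoord a x := by
  have : Nonempty (Fin n) := ⟨⟨0, hn⟩⟩
  exact div_pos (add_pos_of_nonneg_of_pos ha
    (Finset.sum_pos (fun j _ => hx j.succ) Finset.univ_nonempty)) (hx 0)

theorem hasFDerivAt_lynessCoord {x : Fin (n + 1) → ℝ} (hx : x 0 ≠ 0) :
    HasFDerivAt (lynessCoord a)
      ((x 0)⁻¹ • ∑ j : Fin n, ContinuousLinearMap.proj (R := ℝ) (φ := fun _ => ℝ) j.succ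
        - (lynessCoord a x / x 0) • ContinuousLinearMap.proj 0) x := by
  have hsum : HasFDerivAt (fun y : Fin (n + 1) → ℝ => a + ∑ j : Fin n, y j.succ)
      (∑ j : Fin n, ContinuousLinearMap.proj (R := ℝ) (φ := fun _ => ℝ) j.succ) x :=
    (HasFDerivAt.fun_sum fun j _ => hasFDerivAt_apply j.succ x).const_add a
  have hinv := (hasDerivAt_inv hx).comp_hasFDerivAt x (hasFDerivAt_apply (𝕜 := ℝ) 0 x)
  refine ((hsum.mul hinv).congr_of_eventuallyEq (.of_eq ?_)).congr_fderiv ?_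
  · ext y; simp [lynessCoord, div_eq_mul_inv]
  · ext v; simp [lynessCoord]; ring

theorem hasFDerivAt_lynessUpdate {x : Fin (n + 1) → ℝ} (hx : x 0 ≠ 0) :
    HasFDerivAt (lynessUpdate a) (updateFDeriv 0 (fderiv ℝ (lynessCoord a) x)) x :=
  hasFDerivAt_update_self 0 (hasFDerivAt_lynessCoord hx).differentiableAt.hasFDerivAt

theorem det_fderiv_lynessUpdate {x : Fin (n + 1) → ℝ} (hx : x 0 ≠ 0) :
    (updateFDeriv 0 (fderiv ℝ (lynessCoord a) x)).det = -(lynessCoord a x / x 0) := by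
  simp [det_updateFDeriv, (hasFDerivAt_lynessCoord hx).fderiv]

theorem prod_lynessUpdate {x : Fin (n + 1) → ℝ} (hx : x 0 ≠ 0) :
    ∏ i, lynessUpdate a x i = lynessCoord a x / x 0 * ∏ i, x i := by
  simp only [lynessUpdate, Fin.prod_univ_succ, update_self, ne_eq, Fin.succ_ne_zero,
    not_false_eq_true, update_of_ne]
  field_simp

theorem lynessUpdate_pos (hn : 0 < n) (ha : 0 ≤ a) {x : Fin (n + 1) → ℝ} (hx : ∀ i, 0 < x i)
    (i : Fin (n + 1)) : 0 < lynessUpdate a x i := by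
  rcases eq_or_ne i 0 with rfl | hi
  · simpa [lynessUpdate] using lynessCoord_pos hn ha hx
  · simpa [lynessUpdate, hi] using hx i

theorem lynessUpdate_lynessUpdate {x : Fin (n + 1) → ℝ} (hx : x 0 ≠ 0)
    (hc : lynessCoord a x ≠ 0) :
    lynessUpdate a (lynessUpdate a x) = x := by
  have hN : a + ∑ j : Fin n, x j.succ ≠ 0 := fun h => hc (by simp [lynessCoord, h])
  have hnew : lynessCoord a (lynessUpdate a x) = x 0 := by
    simp only [lynessCoord, lynessUpdate, update_self, ne_eq, Fin.succ_ne_zero, not_false_eq_true,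
      update_of_ne]
    field_simp
  ext i
  rcases eq_or_ne i 0 with rfl | hi
  · rw [lynessUpdate, update_self, hnew]
  · simp [lynessUpdate, hi]

theorem injOn_lynessUpdate (hn : 0 < n) (ha : 0 ≤ a) {S : Set (Fin (n + 1) → ℝ)}
    (hS : ∀ x ∈ S, ∀ i, 0 < x i) : Set.InjOn (lynessUpdate a) S :=
  Set.LeftInvOn.injOn (f₁' := lynessUpdate a) fun x hx =>
    lynessUpdate_lynessUpdate (hS x hx 0).ne' (lynessCoord_pos hn ha (hS x hx)).ne'

theorem measurableSet_image_lynessUpdate (hn : 0 < n) (ha : 0 ≤ a) {S : Set (Fin (n + 1) → ℝ)}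
    (hSm : MeasurableSet S) (hS : ∀ x ∈ S, ∀ i, 0 < x i) : MeasurableSet (lynessUpdate a '' S) :=
  measurable_image_of_fderivWithin hSm
    (fun x hx => (hasFDerivAt_lynessUpdate (hS x hx 0).ne').hasFDerivWithinAt)
    (injOn_lynessUpdate hn ha hS)

theorem setLIntegral_image_lynessUpdate (hn : 0 < n) (ha : 0 ≤ a) {S : Set (Fin (n + 1) → ℝ)}
    (hSm : MeasurableSet S) (hS : ∀ x ∈ S, ∀ i, 0 < x i) :
    ∫⁻ x in lynessUpdate a '' S, ENNReal.ofReal (∏ i, x i)⁻¹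
      = ∫⁻ x in S, ENNReal.ofReal (∏ i, x i)⁻¹ := by
  rw [lintegral_image_eq_lintegral_abs_det_fderiv_mul volume hSm
    (fun x hx => (hasFDerivAt_lynessUpdate (hS x hx 0).ne').hasFDerivWithinAt)
    (injOn_lynessUpdate hn ha hS)]
  refine setLIntegral_congr_fun hSm fun x hx => ?_
  have hx0 : 0 < x 0 := hS x hx 0
  have hc : 0 < lynessCoord a x := lynessCoord_pos hn ha (hS x hx)
  have hprod : 0 < ∏ i, x i := Finset.prod_pos fun i _ => hS x hx i
  rw [det_fderiv_lynessUpdate hx0.ne', prod_lynessUpdate hx0.ne', abs_neg,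
    abs_of_pos (by positivity), ← ENNReal.ofReal_mul (by positivity)]
  congr 1
  field_simp

theorem lynessMap_pos (hn : 0 < n) (ha : 0 ≤ a) {x : Fin (n + 1) → ℝ} (hx : ∀ i, 0 < x i)
    (i : Fin (n + 1)) : 0 < lynessMap a x i :=
  lynessUpdate_pos hn ha hx _

theorem image_lynessMap (S : Set (Fin (n + 1) → ℝ)) :
    lynessMap a '' S = (· ∘ finRotate (n + 1)) '' (lynessUpdate a '' S) :=
  Set.image_comp (· ∘ finRotate (n + 1)) (lynessUpdate a) S

theorem measurableSet_image_lynessMap (hn : 0 < n) (ha : 0 ≤ a) {S : Set (Fin (n + 1) → ℝ)}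
    (hSm : MeasurableSet S) (hS : ∀ x ∈ S, ∀ i, 0 < x i) : MeasurableSet (lynessMap a '' S) := by
  rw [image_lynessMap]
  exact (measurableSet_image_lynessUpdate hn ha hSm hS).image_comp_perm _

theorem setLIntegral_image_lynessMap (hn : 0 < n) (ha : 0 ≤ a) {S : Set (Fin (n + 1) → ℝ)}
    (hSm : MeasurableSet S) (hS : ∀ x ∈ S, ∀ i, 0 < x i) :
    ∫⁻ x in lynessMap a '' S, ENNReal.ofReal (∏ i, x i)⁻¹
      = ∫⁻ x in S, ENNReal.ofReal (∏ i, x i)⁻¹ := by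
  simp only [image_lynessMap, setLIntegral_image_comp_perm, comp_apply, Equiv.prod_comp]
  exact setLIntegral_image_lynessUpdate hn ha hSm hS

/-- for odd `k = 2ℓ+1`, the measure `m₂(B) = ∫_B dx/(x₁⋯x_k)` is
invariant under `F∘F` on the positive orthant. -/
theorem lyness_m2_invariant (l : ℕ) (hl : 1 ≤ l) (a : ℝ) (ha : 0 ≤ a)
    (F : (Fin (2 * l + 1) → ℝ) → (Fin (2 * l + 1) → ℝ))
    (hF : ∀ x : Fin (2 * l + 1) → ℝ, ∀ i : Fin (2 * l + 1),
      F x i = if h : (i : ℕ) + 1 < 2 * l + 1 then x ⟨(i : ℕ) + 1, h⟩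
              else (a + (∑ j, x j) - x ⟨0, by omega⟩) / x ⟨0, by omega⟩)
    (B : Set (Fin (2 * l + 1) → ℝ)) (hB : MeasurableSet B)
    (hBQ : ∀ x ∈ B, ∀ i, 0 < x i) :
    ∫⁻ x in (F ∘ F) '' B, ENNReal.ofReal (∏ i, x i)⁻¹ ∂volume
      = ∫⁻ x in B, ENNReal.ofReal (∏ i, x i)⁻¹ ∂volume := by
  obtain rfl : F = lynessMap a :=
    funext fun x => funext fun i => (hF x i).trans (lynessMap_apply x i).symm
  have hn : 0 < 2 * l := by omega
  have hFBQ : ∀ y ∈ lynessMap a '' B, ∀ i, 0 < y i := by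
    rintro _ ⟨x, hx, rfl⟩
    exact lynessMap_pos hn ha (hBQ x hx)
  rw [Set.image_comp, setLIntegral_image_lynessMap hn ha
    (measurableSet_image_lynessMap hn ha hB hBQ) hFBQ, setLIntegral_image_lynessMap hn ha hB hBQ]
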